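/- arXiv:1302.2664 — 2 statements merged into one kernel-verified Lean document; each statement's English description precedes it below -/
import Mathlib

section
/- For every nonnegative integer a, the alternating sum over k from -a to a of (-1)^k times the cube of the binomial coefficient C(2a, k+a) equals (3a)!/(a!)^3. -/
/-!
Dixon's identity is the case `a = b = c` of its three-parameter form
`∑ₖ (-1)^k C(a+b, a+k) C(b+c, b+k) C(c+a, c+k) = (a+b+c)! / (a! b! c!)`,
which is proved by induction on `a` from the first-order recurrence
`(a+1) S(a+1) = (a+b+c+1) S(a)`. The recurrence comes from creative telescoping: the summands
satisfy `(a+1) T(a+1, k) - (a+b+c+1) T(a, k) = G(k) - G(k+1)` with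
`G(k) = (-1)^k (b+k)/2 · C(a+b, a+k) C(b+c, b+k) C(c+a, c+k-1)`.
Once binomial coefficients are extended by zero to all integer lower indices, this is a polynomial
consequence of Pascal's rule and of `(k+1) C(n, k+1) = (n-k) C(n, k)`, which then hold for every
integer `k`, so no boundary cases arise.
-/

open Finset Nat

def intChoose (n : ℕ) (k : ℤ) : ℚ := if 0 ≤ k then (n.choose k.toNat : ℚ) else 0

@[simp] lemma intChoose_natCast (n j : ℕ) : intChoose n j = n.choose j := by simp [intChoose]

@[simp] lemma intChoose_zero_right (n : ℕ) : intChoose n 0 = 1 := by simp [intChoose]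

lemma intChoose_natCast_add_one (n j : ℕ) : intChoose n (j + 1) = n.choose (j + 1) := by
  exact_mod_cast intChoose_natCast n (j + 1)

lemma intChoose_eq_zero_of_neg {n : ℕ} {k : ℤ} (hk : k < 0) : intChoose n k = 0 := by
  simp [intChoose, hk.not_ge]

lemma intChoose_eq_zero_of_lt {n : ℕ} {k : ℤ} (hk : n < k) : intChoose n k = 0 := by
  lift k to ℕ using by omega
  simp [Nat.choose_eq_zero_of_lt (by omega : n < k)]

lemma intChoose_succ_succ (n : ℕ) (k : ℤ) :
    intChoose (n + 1) (k + 1) = intChoose n k + intChoose n (k + 1) := by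
  rcases lt_trichotomy k (-1) with hk | rfl | hk
  · simp [intChoose_eq_zero_of_neg (by omega : k + 1 < 0),
      intChoose_eq_zero_of_neg (by omega : k < 0)]
  · simp [intChoose]
  · lift k to ℕ using by omega
    simp only [intChoose_natCast, intChoose_natCast_add_one]
    exact_mod_cast Nat.choose_succ_succ n k

lemma succ_mul_intChoose_succ (n : ℕ) (k : ℤ) :
    (k + 1) * intChoose n (k + 1) = (n - k) * intChoose n k := by
  rcases lt_trichotomy k (-1) with hk | rfl | hk
  · simp [intChoose_eq_zero_of_neg (by omega : k + 1 < 0),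
      intChoose_eq_zero_of_neg (by omega : k < 0)]
  · simp [intChoose_eq_zero_of_neg]
  lift k to ℕ using by omega
  simp only [intChoose_natCast, intChoose_natCast_add_one]
  rcases le_or_gt k n with hkn | hnk
  · push_cast
    rw [mul_comm, mul_comm (_ - _), ← Nat.cast_sub hkn]
    exact_mod_cast Nat.choose_succ_right_eq n k
  · simp [Nat.choose_eq_zero_of_lt hnk, Nat.choose_eq_zero_of_lt (by omega : n < k + 1)]

def dixonTerm (a b c : ℕ) (k : ℤ) : ℚ :=
  (-1) ^ k * intChoose (a + b) (a + k) * intChoose (b + c) (b + k) * intChoose (c + a) (c + k)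

def dixonCertificate (a b c : ℕ) (k : ℤ) : ℚ :=
  (-1) ^ k * ((b + k) / 2) * intChoose (a + b) (a + k) * intChoose (b + c) (b + k) *
    intChoose (c + a) (c + k - 1)

lemma dixonTerm_succ_sub (a b c : ℕ) (k : ℤ) :
    (a + 1) * dixonTerm (a + 1) b c k - (a + b + c + 1) * dixonTerm a b c k =
      dixonCertificate a b c k - dixonCertificate a b c (k + 1) := by
  have pascal : intChoose (c + a + 1) (c + k) =
      intChoose (c + a) (c + k - 1) + intChoose (c + a) (c + k) := by
    simpa using intChoose_succ_succ (c + a) (c + k - 1)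
  have ratioX := succ_mul_intChoose_succ (a + b) (a + k)
  have ratioY := succ_mul_intChoose_succ (b + c) (b + k)
  have ratioZ := succ_mul_intChoose_succ (c + a) (c + k - 1)
  push_cast at ratioX ratioY ratioZ
  simp only [sub_add_cancel] at ratioZ
  simp only [dixonTerm, dixonCertificate, zpow_add_one₀ (by norm_num : (-1 : ℚ) ≠ 0)]
  rw [show a + 1 + b = a + b + 1 by ring, show c + (a + 1) = c + a + 1 by ring, Nat.cast_succ,
    add_right_comm (a : ℤ) 1 k, intChoose_succ_succ, pascal, ← add_assoc (a : ℤ),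
    ← add_assoc (b : ℤ), show (c : ℤ) + (k + 1) - 1 = c + k by ring]
  push_cast
  set x₀ := intChoose (a + b) (a + k)
  set x₁ := intChoose (a + b) (a + k + 1)
  set y₀ := intChoose (b + c) (b + k)
  set z₀ := intChoose (c + a) (c + k)
  set z' := intChoose (c + a) (c + k - 1)
  linear_combination (-1 : ℚ) ^ k * ((y₀ * z' / 2 + y₀ * z₀) * ratioX
    - x₁ * z₀ / 2 * ratioY - (x₀ * y₀ + x₁ * y₀ / 2) * ratioZ)

lemma dixonTerm_eq_zero {a b c : ℕ} {k : ℤ} (hk : k ∉ Icc (-(a : ℤ)) a) :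
    dixonTerm a b c k = 0 := by
  rw [mem_Icc, not_and_or, not_le, not_le] at hk
  rcases hk with hk | hk
  · simp [dixonTerm, intChoose_eq_zero_of_neg (by omega : (a : ℤ) + k < 0)]
  · simp [dixonTerm, intChoose_eq_zero_of_lt (by push_cast; omega : ((c + a : ℕ) : ℤ) < c + k)]

noncomputable def dixonSum (a b c : ℕ) : ℚ := ∑ k ∈ Icc (-(a : ℤ)) a, dixonTerm a b c k

lemma dixonSum_eq_sum_Ico {a N : ℕ} (b c : ℕ) (h : a < N) :
    dixonSum a b c = ∑ k ∈ Ico (-(N : ℤ)) N, dixonTerm a b c k :=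
  sum_subset (fun k hk ↦ by rw [mem_Icc] at hk; rw [mem_Ico]; omega)
    (fun _ _ hk ↦ dixonTerm_eq_zero hk)

lemma succ_mul_dixonSum_succ (a b c : ℕ) :
    (a + 1) * dixonSum (a + 1) b c = (a + b + c + 1) * dixonSum a b c := by
  rw [← sub_eq_zero, dixonSum_eq_sum_Ico b c (by omega : a + 1 < a + 2),
    dixonSum_eq_sum_Ico b c (by omega : a < a + 2), mul_sum, mul_sum, ← sum_sub_distrib]
  simp_rw [dixonTerm_succ_sub, sum_Ico_int_sub]
  push_cast
  rw [dixonCertificate, dixonCertificate,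
    intChoose_eq_zero_of_neg (by omega : (a : ℤ) + -(a + 2) < 0),
    intChoose_eq_zero_of_lt (by push_cast; omega : ((c + a : ℕ) : ℤ) < c + (a + 2) - 1)]
  simp

theorem dixon_identity (a b c : ℕ) :
    dixonSum a b c = (a + b + c)! / (a ! * b ! * c !) := by
  induction a with
  | zero => simp [dixonSum, dixonTerm, Nat.cast_add_choose]
  | succ a ih =>
    have h := succ_mul_dixonSum_succ a b c
    rw [ih] at h
    field_simp at h
    rw [eq_div_iff (by positivity), show a + 1 + b + c = a + b + c + 1 by ring, Nat.factorial_succ,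
      Nat.factorial_succ]
    push_cast
    linear_combination h

theorem dixon_original (a : ℕ) :
    ∑ k ∈ Finset.Icc (-(a : ℤ)) (a : ℤ),
      (-1 : ℚ) ^ k * ((2 * a).choose (k + a).toNat : ℚ) ^ 3
      = ((3 * a).factorial : ℚ) / ((a.factorial : ℚ)) ^ 3 := by
  have h := dixon_identity a a a
  rw [show a + a + a = 3 * a by ring, ← pow_three'] at h
  rw [← h, dixonSum]
  refine sum_congr rfl fun k hk ↦ ?_
  rw [mem_Icc] at hk
  rw [dixonTerm, intChoose, if_pos (by omega), two_mul, add_comm k]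
  ring
end

section
/- (3a)!/(a!)^3 is an integer for every nonnegative integer a; indeed it equals the central coefficient-type sum ∑_{k=-a}^{a} (-1)^k C(2a,a+k)^3. -/
open Finset

/-- WZ certificate polynomial for Dixon's identity. -/
private def Qpoly (n j : ℚ) : ℚ :=
  -(9*n+6)*j^4 + (90*n^2+132*n+48)*j^3 - (348*n^3+792*n^2+594*n+147)*j^2
    + (624*n^4+1932*n^3+2214*n^2+1113*n+207)*j
    - (448*n^5+1760*n^4+2728*n^3+2084*n^2+784*n+116)

private def Gq (n i : ℕ) : ℚ :=
  (-1)^(i+1) * (((2*n+1).choose i : ℕ) : ℚ)^3 * Qpoly n (i+1) / (2*(2*(n:ℚ)+1)^3)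

private def Hq (n j : ℕ) : ℚ :=
  (-1)^j * (((n:ℚ)+1)^2 * (((2*n+2).choose j : ℕ) : ℚ)^3
    + 3*(3*(n:ℚ)+1)*(3*(n:ℚ)+2) * (((2*n).choose j : ℕ) : ℚ)^3)

private def Aq (n : ℕ) : ℚ := ∑ j ∈ Finset.range (2*n+1), (-1:ℚ)^j * (((2*n).choose j : ℕ) : ℚ)^3

private lemma factq_ne (m : ℕ) : ((m.factorial : ℕ) : ℚ) ≠ 0 :=
  Nat.cast_ne_zero.2 (Nat.factorial_ne_zero m)

private lemma choose_cast_eq {j d m : ℕ} (h : j + d = m) :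
    ((m.choose j : ℕ) : ℚ) = (m.factorial : ℚ) / ((j.factorial : ℚ) * (d.factorial : ℚ)) := by
  subst h
  exact Nat.cast_add_choose (K := ℚ)

private lemma gq_base (n : ℕ) : Gq n 0 = Hq n 0 := by
  have h1 : (2*(n:ℚ)+1)^3 ≠ 0 := by positivity
  simp only [Gq, Hq, Qpoly, Nat.choose_zero_right]
  push_cast
  field_simp
  ring

set_option maxHeartbeats 1000000 in
private lemma gq_key (n i : ℕ) : Gq n (i+1) - Gq n i = Hq n (i+1) := by
  rcases le_or_gt (i+1) (2*n) with h | h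
  · -- main case : 1 ≤ i+1 ≤ 2n
    simp only [Gq, Hq]
    push_cast
    set m1 : ℚ := 2*(n:ℚ) + 1 with hm1
    set u : ℚ := 2*(n:ℚ) - (i:ℚ) with hu
    set v : ℚ := u + 1 with hv
    clear_value m1 u v
    have hiq : (i:ℚ) + 1 ≤ 2*(n:ℚ) := by exact_mod_cast (Nat.cast_le (α := ℚ)).2 h
    have hu0 : u ≠ 0 := by rw [hu]; intro hc; nlinarith
    have hv0 : v ≠ 0 := by rw [hv, hu]; intro hc; nlinarith
    have hm10 : m1 ≠ 0 := by rw [hm1]; positivity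
    have hj0 : ((i:ℚ)+1) ≠ 0 := by positivity
    -- choose recurrences
    have R1 : (((2*n).choose (i+1) : ℕ) : ℚ) * m1 = (((2*n+1).choose (i+1) : ℕ) : ℚ) * u := by
      have h0 : (2*n).choose (i+1) * (2*n+1) = (2*n+1).choose (i+1) * (2*n - i) := by
        have h0' := Nat.choose_mul_succ_eq (2*n) (i+1)
        rwa [show 2*n+1-(i+1) = 2*n-i by omega] at h0'
      have h1 := congrArg (fun t : ℕ => (t:ℚ)) h0
      push_cast [Nat.cast_sub (show i ≤ 2*n by omega)] at h1
      rw [hm1, hu]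
      linear_combination h1
    have R2 : m1 * (((2*n).choose i : ℕ) : ℚ)
        = (((2*n+1).choose (i+1) : ℕ) : ℚ) * ((i:ℚ)+1) := by
      have h0 := Nat.add_one_mul_choose_eq (2*n) i
      have h1 := congrArg (fun t : ℕ => (t:ℚ)) h0
      push_cast at h1
      rw [hm1]
      linear_combination h1
    have R3 : (((2*n).choose i : ℕ) : ℚ) * m1 = (((2*n+1).choose i : ℕ) : ℚ) * v := by
      have h0 := Nat.choose_mul_succ_eq (2*n) i
      have h1 := congrArg (fun t : ℕ => (t:ℚ)) h0
      push_cast [Nat.cast_sub (show i ≤ 2*n+1 by omega)] at h1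
      rw [hm1, hv, hu]
      linear_combination h1
    have R4 : (m1+1) * (((2*n+1).choose i : ℕ) : ℚ)
        = (((2*n+2).choose (i+1) : ℕ) : ℚ) * ((i:ℚ)+1) := by
      have h0 := Nat.add_one_mul_choose_eq (2*n+1) i
      have h1 := congrArg (fun t : ℕ => (t:ℚ)) h0
      push_cast at h1
      rw [hm1]
      linear_combination h1
    have hpu : (((2*n).choose i : ℕ) : ℚ) * u
        = (((2*n).choose (i+1) : ℕ) : ℚ) * ((i:ℚ)+1) := by
      apply mul_left_cancel₀ hm10
      linear_combination u * R2 - ((i:ℚ)+1) * R1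
    have hzu : (((2*n+1).choose i : ℕ) : ℚ) * (u*v)
        = (((2*n).choose (i+1) : ℕ) : ℚ) * ((i:ℚ)+1) * m1 := by
      linear_combination (-u) * R3 + m1 * hpu
    have hwu : (((2*n+2).choose (i+1) : ℕ) : ℚ) * (u*v)
        = (((2*n).choose (i+1) : ℕ) : ℚ) * (m1+1) * m1 := by
      apply mul_left_cancel₀ hj0
      linear_combination (-(u*v)) * R4 + (m1+1) * hzu
    have hy3 : (((2*n+1).choose (i+1) : ℕ) : ℚ)^3 * u^3
        = (((2*n).choose (i+1) : ℕ) : ℚ)^3 * m1^3 := by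
      linear_combination (-(((((2*n).choose (i+1) : ℕ) : ℚ) * m1)^2
        + ((((2*n).choose (i+1) : ℕ) : ℚ) * m1) * ((((2*n+1).choose (i+1) : ℕ) : ℚ) * u)
        + ((((2*n+1).choose (i+1) : ℕ) : ℚ) * u)^2)) * R1
    have hz3 : (((2*n+1).choose i : ℕ) : ℚ)^3 * (u^3*v^3)
        = (((2*n).choose (i+1) : ℕ) : ℚ)^3 * ((i:ℚ)+1)^3 * m1^3 := by
      linear_combination (((((2*n+1).choose i : ℕ) : ℚ) * (u*v))^2
        + ((((2*n+1).choose i : ℕ) : ℚ) * (u*v)) * ((((2*n).choose (i+1) : ℕ) : ℚ) * ((i:ℚ)+1) * m1)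
        + ((((2*n).choose (i+1) : ℕ) : ℚ) * ((i:ℚ)+1) * m1)^2) * hzu
    have hw3 : (((2*n+2).choose (i+1) : ℕ) : ℚ)^3 * (u^3*v^3)
        = (((2*n).choose (i+1) : ℕ) : ℚ)^3 * (m1+1)^3 * m1^3 := by
      linear_combination (((((2*n+2).choose (i+1) : ℕ) : ℚ) * (u*v))^2
        + ((((2*n+2).choose (i+1) : ℕ) : ℚ) * (u*v)) * ((((2*n).choose (i+1) : ℕ) : ℚ) * (m1+1) * m1)
        + ((((2*n).choose (i+1) : ℕ) : ℚ) * (m1+1) * m1)^2) * hwu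
    have cert : v^3 * Qpoly (n:ℚ) ((i:ℚ)+1+1) + ((i:ℚ)+1)^3 * Qpoly (n:ℚ) ((i:ℚ)+1)
        + 2*((n:ℚ)+1)^2*(m1+1)^3*m1^3 + 6*(3*(n:ℚ)+1)*(3*(n:ℚ)+2)*u^3*v^3 = 0 := by
      rw [hv, hu, hm1]
      simp only [Qpoly]
      push_cast
      ring
    have hD : (2*m1^3*(u^3*v^3) : ℚ) ≠ 0 := by
      exact mul_ne_zero (mul_ne_zero two_ne_zero (pow_ne_zero _ hm10))
        (mul_ne_zero (pow_ne_zero _ hu0) (pow_ne_zero _ hv0))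
    apply mul_right_cancel₀ hD
    have e : ∀ c : ℚ, c/(2*m1^3) * (2*m1^3*(u^3*v^3)) = c*(u^3*v^3) := by
      intro c; field_simp
    rw [sub_mul, e, e]
    linear_combination ((-1:ℚ)^i * Qpoly (n:ℚ) ((i:ℚ)+1+1) * v^3) * hy3
      + ((-1:ℚ)^i * Qpoly (n:ℚ) ((i:ℚ)+1)) * hz3
      + (2*(-1:ℚ)^i * m1^3 * ((n:ℚ)+1)^2) * hw3
      + ((-1:ℚ)^i * (((2*n).choose (i+1) : ℕ) : ℚ)^3 * m1^3) * cert
  rcases (show i = 2*n ∨ i = 2*n+1 ∨ 2*n+2 ≤ i by omega) with h | h | h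
  · -- i = 2n
    subst h
    have c1 : (2*n).choose (2*n+1) = 0 := Nat.choose_eq_zero_of_lt (by omega)
    have c2 : (2*n+1).choose (2*n+1) = 1 := Nat.choose_self _
    have c3 : (2*n+1).choose (2*n) = 2*n+1 := by
      have hsym := Nat.choose_symm (show 1 ≤ 2*n+1 by omega)
      rw [Nat.choose_one_right] at hsym
      simpa using hsym
    have c4 : (2*n+2).choose (2*n+1) = 2*n+2 := by
      have hsym := Nat.choose_symm (show 1 ≤ 2*n+2 by omega)
      rw [Nat.choose_one_right] at hsym
      simpa using hsym
    have hneg : ((-1:ℚ))^(2*n) = 1 := by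
      rw [pow_mul]; norm_num
    have ne4 : (2*(n:ℚ)+1) ≠ 0 := by positivity
    simp only [Gq, Hq, Qpoly, c1, c2, c3, c4, show 2*n+1+1 = 2*n+2 from rfl,
      show 2*n+1+1+1 = 2*n+3 from rfl, pow_succ, hneg]
    push_cast
    field_simp
    ring
  · -- i = 2n+1
    subst h
    have c1 : (2*n).choose (2*n+2) = 0 := Nat.choose_eq_zero_of_lt (by omega)
    have c2 : (2*n+1).choose (2*n+2) = 0 := Nat.choose_eq_zero_of_lt (by omega)
    have c3 : (2*n+1).choose (2*n+1) = 1 := Nat.choose_self _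
    have c4 : (2*n+2).choose (2*n+2) = 1 := Nat.choose_self _
    have hneg : ((-1:ℚ))^(2*n) = 1 := by
      rw [pow_mul]; norm_num
    have ne4 : (2*(n:ℚ)+1) ≠ 0 := by positivity
    simp only [Gq, Hq, Qpoly, show 2*n+1+1 = 2*n+2 from rfl, show 2*n+1+1+1 = 2*n+3 from rfl,
      c1, c2, c3, c4, pow_succ, hneg]
    push_cast
    field_simp
    ring
  · -- i ≥ 2n+2 : everything vanishes
    have c1 : (2*n).choose (i+1) = 0 := Nat.choose_eq_zero_of_lt (by omega)
    have c2 : (2*n+1).choose (i+1) = 0 := Nat.choose_eq_zero_of_lt (by omega)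
    have c3 : (2*n+1).choose i = 0 := Nat.choose_eq_zero_of_lt (by omega)
    have c4 : (2*n+2).choose (i+1) = 0 := Nat.choose_eq_zero_of_lt (by omega)
    simp [Gq, Hq, c1, c2, c3, c4]

private lemma sumH (n M : ℕ) : ∑ j ∈ Finset.range (M+1), Hq n j = Gq n M := by
  induction M with
  | zero => simpa [Finset.sum_range_one] using (gq_base n).symm
  | succ M ih =>
      rw [Finset.sum_range_succ, ih]
      have := gq_key n M
      linarith

private lemma gq_vanish (n : ℕ) : Gq n (2*n+2) = 0 := by
  have c : (2*n+1).choose (2*n+2) = 0 := Nat.choose_eq_zero_of_lt (by omega)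
  simp [Gq, c]

private lemma aq_rec (n : ℕ) :
    ((n:ℚ)+1)^2 * Aq (n+1) + 3*(3*(n:ℚ)+1)*(3*(n:ℚ)+2) * Aq n = 0 := by
  have h0 : ∑ j ∈ Finset.range (2*n+3), Hq n j = 0 := by
    rw [show 2*n+3 = (2*n+2)+1 by omega, sumH n (2*n+2), gq_vanish]
  have c1 : (2*n).choose (2*n+1) = 0 := Nat.choose_eq_zero_of_lt (by omega)
  have c2 : (2*n).choose (2*n+2) = 0 := Nat.choose_eq_zero_of_lt (by omega)
  have e2 : Aq n = ∑ j ∈ Finset.range (2*n+3), (-1:ℚ)^j * (((2*n).choose j : ℕ) : ℚ)^3 := by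
    rw [show 2*n+3 = (2*n+1)+1+1 by omega, Finset.sum_range_succ, Finset.sum_range_succ]
    simp [Aq, c1, c2, show 2*n+1+1 = 2*n+2 from rfl]
  have e1 : Aq (n+1) = ∑ j ∈ Finset.range (2*n+3), (-1:ℚ)^j * (((2*n+2).choose j : ℕ) : ℚ)^3 := by
    have h2 : 2*(n+1) = 2*n+2 := by omega
    rw [Aq, h2]
  calc ((n:ℚ)+1)^2 * Aq (n+1) + 3*(3*(n:ℚ)+1)*(3*(n:ℚ)+2) * Aq n
      = ∑ j ∈ Finset.range (2*n+3), Hq n j := by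
        rw [e1, e2, Finset.mul_sum, Finset.mul_sum, ← Finset.sum_add_distrib]
        refine Finset.sum_congr rfl fun j _ => ?_
        simp only [Hq]; ring
    _ = 0 := h0

private lemma aq_val (n : ℕ) :
    Aq n = (-1:ℚ)^n * ((3*n).factorial : ℚ) / ((n.factorial : ℚ))^3 := by
  induction n with
  | zero => simp [Aq]
  | succ n ih =>
      have hne : ((n:ℚ)+1)^2 ≠ 0 := by positivity
      have hrec := aq_rec n
      have hA : Aq (n+1) = -(3*(3*(n:ℚ)+1)*(3*(n:ℚ)+2)) * Aq n / (((n:ℚ)+1)^2) := by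
        field_simp
        linarith
      have hf1 : (((3*(n+1)).factorial : ℕ) : ℚ)
          = (3*(n:ℚ)+3)*(3*(n:ℚ)+2)*(3*(n:ℚ)+1) * ((3*n).factorial : ℚ) := by
        rw [show 3*(n+1) = ((3*n+1)+1)+1 by omega, Nat.factorial_succ, Nat.factorial_succ,
          Nat.factorial_succ]
        push_cast; ring
      have hf2 : (((n+1).factorial : ℕ) : ℚ) = ((n:ℚ)+1) * (n.factorial : ℚ) := by
        rw [Nat.factorial_succ]; push_cast; ring
      rw [hA, ih, hf1, hf2]
      have nf1 := factq_ne n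
      have nf3 := factq_ne (3*n)
      have ne1 : ((n:ℚ)+1) ≠ 0 := by positivity
      field_simp
      ring

theorem dixon_integrality (a : ℕ) :
    ((3 * a).factorial : ℚ) / ((a.factorial : ℚ)) ^ 3
        = ∑ k ∈ Finset.Icc (-(a : ℤ)) (a : ℤ),
            (-1 : ℚ) ^ k * ((2 * a).choose (k + a).toNat : ℚ) ^ 3 ∧
    (a.factorial ^ 3 ∣ (3 * a).factorial) := by
  constructor
  · have hsum : ∑ k ∈ Finset.Icc (-(a : ℤ)) (a : ℤ),
        (-1 : ℚ) ^ k * ((2 * a).choose (k + a).toNat : ℚ) ^ 3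
        = (-1:ℚ)^a * Aq a := by
      rw [Aq, Finset.mul_sum]
      refine Finset.sum_bij (fun k _ => (k + a).toNat) ?_ ?_ ?_ ?_
      · intro k hk
        simp only [Finset.mem_Icc] at hk
        simp only [Finset.mem_range]
        omega
      · intro k1 h1 k2 h2 hE
        simp only [Finset.mem_Icc] at h1 h2
        omega
      · intro j hj
        simp only [Finset.mem_range] at hj
        refine ⟨(j:ℤ) - a, ?_, ?_⟩
        · simp only [Finset.mem_Icc]; omega
        · show ((j:ℤ) - a + a).toNat = j
          omega
      · intro k hk
        simp only [Finset.mem_Icc] at hk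
        obtain ⟨j, hj⟩ : ∃ j : ℕ, k + (a:ℤ) = j := ⟨(k + a).toNat, by omega⟩
        have hpow : (-1:ℚ)^k = (-1:ℚ)^a * (-1:ℚ)^((k + a).toNat) := by
          rw [show ((k + (a:ℤ)).toNat) = j by omega, show k = (j:ℤ) - (a:ℤ) by omega,
            zpow_sub₀ (by norm_num : (-1:ℚ) ≠ 0), zpow_natCast, zpow_natCast]
          rcases Nat.even_or_odd a with h | h
          · rw [h.neg_one_pow]; norm_num
          · rw [h.neg_one_pow]; ring
        rw [hpow]; ring
    rw [hsum, aq_val a]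
    rcases Nat.even_or_odd a with h | h
    · rw [h.neg_one_pow]; ring
    · rw [h.neg_one_pow]; ring
  · have h1 : a.factorial * a.factorial ∣ (2*a).factorial := by
      have := Nat.factorial_mul_factorial_dvd_factorial_add a a
      rwa [← two_mul] at this
    have h2 : (2*a).factorial * a.factorial ∣ (3*a).factorial := by
      have := Nat.factorial_mul_factorial_dvd_factorial_add (2*a) a
      rwa [show 2*a+a = 3*a by ring] at this
    calc a.factorial ^ 3 = (a.factorial * a.factorial) * a.factorial := by ring
      _ ∣ (2*a).factorial * a.factorial := mul_dvd_mul_right h1 _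
      _ ∣ (3*a).factorial := h2
end
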